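/- For every m ≥ 1 and all positive definite hermitian complex m × m matrices M and N, one has Tr(M·N) ≥ m · (det M)^(1/m) · (det N)^(1/m). -/

import Mathlib

/-!
Factor `M = B⋆ B`. Then `Tr (M N) = Tr (B N B⋆)` and `det (B N B⋆) = det M · det N`, where
`B N B⋆` is positive semidefinite. Its eigenvalues are nonnegative, sum to its trace and multiply
to its determinant, so AM–GM on them gives the inequality.
-/

open scoped ComplexOrder

namespace Matrix

variable {n 𝕜 : Type*} [Fintype n] [DecidableEq n] [RCLike 𝕜]

theorem PosSemidef.card_mul_re_det_rpow_le_trace {A : Matrix n n 𝕜} (hA : A.PosSemidef) :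
    (((Fintype.card n : ℝ) * RCLike.re A.det ^ (Fintype.card n : ℝ)⁻¹ : ℝ) : 𝕜) ≤ A.trace := by
  set μ := hA.isHermitian.eigenvalues
  have hdet : RCLike.re A.det = ∏ i, μ i := by
    rw [hA.isHermitian.det_eq_prod_eigenvalues, ← RCLike.ofReal_prod, RCLike.ofReal_re]
  rw [hA.isHermitian.trace_eq_sum_eigenvalues, ← RCLike.ofReal_sum, RCLike.ofReal_le_ofReal, hdet]
  rcases isEmpty_or_nonempty n with hn | hn
  · simp
  have hcard : (0 : ℝ) < Fintype.card n := by exact_mod_cast Fintype.card_pos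
  have amgm := Real.geom_mean_le_arith_mean Finset.univ 1 μ (fun _ _ ↦ zero_le_one)
    (by simpa using hcard) (fun i _ ↦ hA.eigenvalues_nonneg i)
  simp only [Pi.one_apply, Real.rpow_one, Finset.sum_const, Finset.card_univ, nsmul_eq_mul,
    mul_one, one_mul] at amgm
  rwa [le_div_iff₀' hcard] at amgm

open scoped MatrixOrder in
theorem PosSemidef.card_mul_re_det_rpow_mul_re_det_rpow_le_trace_mul {M N : Matrix n n 𝕜}
    (hM : M.PosSemidef) (hN : N.PosSemidef) :
    (((Fintype.card n : ℝ) * RCLike.re M.det ^ (Fintype.card n : ℝ)⁻¹ *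
      RCLike.re N.det ^ (Fintype.card n : ℝ)⁻¹ : ℝ) : 𝕜) ≤ (M * N).trace := by
  obtain ⟨B, rfl⟩ := CStarAlgebra.nonneg_iff_eq_star_mul_self.mp hM.nonneg
  have htrace : (B * N * Bᴴ).trace = (star B * B * N).trace := by
    rw [star_eq_conjTranspose, mul_assoc, trace_mul_comm, mul_assoc, trace_mul_comm]
  have hdet : RCLike.re (B * N * Bᴴ).det = RCLike.re (star B * B).det * RCLike.re N.det := by
    obtain ⟨d, -, hd⟩ := RCLike.nonneg_iff_exists_ofReal.mp hN.det_nonneg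
    rw [det_mul, det_mul, det_mul, ← hd, mul_right_comm, mul_comm B.det, star_eq_conjTranspose,
      RCLike.re_mul_ofReal, RCLike.ofReal_re]
  have := (hN.mul_mul_conjTranspose_same B).card_mul_re_det_rpow_le_trace
  rwa [htrace, hdet, Real.mul_rpow (RCLike.nonneg_iff.mp hM.det_nonneg).1
    (RCLike.nonneg_iff.mp hN.det_nonneg).1, ← mul_assoc] at this

end Matrix

/-- For every `m ≥ 1` and all positive definite hermitian complex `m × m` matrices
`M` and `N`, one has `Tr(M·N) ≥ m · (det M)^(1/m) · (det N)^(1/m)`.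
(The determinants of hermitian positive definite matrices are positive reals;
their real `m`-th roots appear on the left, and `≤` is the order on `ℂ`.) -/
theorem stmt_1 :
    ∀ m : ℕ, 1 ≤ m → ∀ M N : Matrix (Fin m) (Fin m) ℂ,
      M.IsHermitian → N.IsHermitian → M.PosDef → N.PosDef →
      ((m : ℝ) * M.det.re ^ ((m : ℝ)⁻¹) * N.det.re ^ ((m : ℝ)⁻¹) : ℝ) ≤
        ((M * N).trace : ℂ) := by
  intro m _ M N _ _ hM hN
  simpa using hM.posSemidef.card_mul_re_det_rpow_mul_re_det_rpow_le_trace_mul hN.posSemidef
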